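/- arXiv:1309.5527 — 3 statements merged into one kernel-verified Lean document; each statement's English description precedes it below -/
import Mathlib

section
/- Let P be a finite uniform poset of length l with associated uniform sequence (P_0, P_1, ..., P_l), where each P_i is a finite pure poset of length i with a minimum element. Then the (l+1)×(l+1) matrices [w_{i-j}(P_i)]_{0 ≤ i,j ≤ l} and [W_{i-j}(P_i)]_{0 ≤ i,j ≤ l} (with entries interpreted as 0 when j > i) are inverse to each other. -/
/-!
Both matrices are lower triangular, so it suffices to show
`∑_{j ≤ k ≤ i} w_{i-k}(P_i) W_{k-j}(P_k) = δ_{ij}`. By uniformity the upper set of an element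
`x ∈ P_i` of rank `i - k` is isomorphic to `P_k`, so `W_{k-j}(P_k)` counts the elements `y ≥ x`
of rank `i - j` in `P_i`. The sum therefore equals `∑_x μ(0̂, x) #{y ≥ x | ρ y = i - j}`, and
summing over `x ≤ y` first, the defining recursion of `μ` leaves only `y = 0̂`.
-/

open scoped Classical

open Finset

section RankFunction

variable {X Y : Type*} [PartialOrder X] [PartialOrder Y]

theorem strictMono_of_covBy_succ [Finite X] {ρ : X → ℕ}
    (hcov : ∀ x y : X, x ⋖ y → ρ y = ρ x + 1) : StrictMono ρ := by
  intro x y hxy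
  induction y using WellFoundedLT.induction with
  | _ y ih =>
    obtain ⟨z, hxz, hzy⟩ := exists_le_covBy_of_lt hxy
    rw [hcov z y hzy]
    rcases hxz.eq_or_lt with rfl | hxz
    · omega
    · have := ih z hzy.lt hxz
      omega

theorem exists_le_rank_eq [Finite X] [OrderBot X] {ρ : X → ℕ} (hbot : ρ ⊥ = 0)
    (hcov : ∀ x y : X, x ⋖ y → ρ y = ρ x + 1) (x : X) {t : ℕ} (ht : t ≤ ρ x) :
    ∃ z ≤ x, ρ z = t := by
  induction x using WellFoundedLT.induction with
  | _ x ih =>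
    rcases ht.eq_or_lt with rfl | hlt
    · exact ⟨x, le_rfl, rfl⟩
    · have hx : ⊥ < x := bot_lt_iff_ne_bot.2 (by rintro rfl; omega)
      obtain ⟨y, -, hyx⟩ := exists_le_covBy_of_lt hx
      obtain ⟨z, hzy, hz⟩ := ih y hyx.lt (by rw [hcov y x hyx] at hlt; omega)
      exact ⟨z, hzy.trans hyx.le, hz⟩

theorem exists_le_isMax [Finite X] (x : X) : ∃ m, x ≤ m ∧ IsMax m := by
  obtain ⟨m, hxm, hm⟩ := Finite.exists_le_maximal (p := fun _ : X => True) trivial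
  exact ⟨m, hxm, maximal_true.1 hm⟩

theorem rank_le_of_pure [Finite X] {ρ : X → ℕ} (hcov : ∀ x y : X, x ⋖ y → ρ y = ρ x + 1)
    {n : ℕ} (hpure : ∀ x, IsMax x → ρ x = n) (x : X) : ρ x ≤ n := by
  obtain ⟨m, hxm, hm⟩ := exists_le_isMax x
  exact hpure m hm ▸ (strictMono_of_covBy_succ hcov).monotone hxm

theorem exists_rank_eq_of_pure [Finite X] [OrderBot X] {ρ : X → ℕ} (hbot : ρ ⊥ = 0)
    (hcov : ∀ x y : X, x ⋖ y → ρ y = ρ x + 1) {n : ℕ} (hpure : ∀ x, IsMax x → ρ x = n)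
    {t : ℕ} (ht : t ≤ n) : ∃ x, ρ x = t := by
  obtain ⟨m, -, hm⟩ := exists_le_isMax (⊥ : X)
  obtain ⟨x, -, hx⟩ := exists_le_rank_eq hbot hcov m (hpure m hm ▸ ht)
  exact ⟨x, hx⟩

theorem rank_orderIso_apply [Finite X] [OrderBot X] [OrderBot Y] {ρX : X → ℕ} {ρY : Y → ℕ}
    (hXbot : ρX ⊥ = 0) (hXcov : ∀ x y : X, x ⋖ y → ρX y = ρX x + 1)
    (hYbot : ρY ⊥ = 0) (hYcov : ∀ x y : Y, x ⋖ y → ρY y = ρY x + 1)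
    (e : X ≃o Y) (x : X) : ρY (e x) = ρX x := by
  induction x using WellFoundedLT.induction with
  | _ x ih =>
    rcases eq_or_ne x ⊥ with rfl | hx
    · rw [e.map_bot, hXbot, hYbot]
    · obtain ⟨y, -, hyx⟩ := exists_le_covBy_of_lt (bot_lt_iff_ne_bot.2 hx)
      rw [hYcov _ _ ((apply_covBy_apply_iff e).2 hyx), hXcov y x hyx, ih y hyx.lt]

theorem covBy_coe_Ici {a : X} {y z : Set.Ici a} (h : y ⋖ z) : (y : X) ⋖ z :=
  (Set.OrdConnected.apply_covBy_apply_iff (OrderEmbedding.subtype _)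
    (by rw [OrderEmbedding.coe_subtype, Subtype.range_coe]; exact Set.ordConnected_Ici)).2 h

theorem rank_orderIso_Ici_apply [Finite X] [OrderBot Y] {ρX : X → ℕ} {ρY : Y → ℕ}
    (hXcov : ∀ x y : X, x ⋖ y → ρX y = ρX x + 1)
    (hYbot : ρY ⊥ = 0) (hYcov : ∀ x y : Y, x ⋖ y → ρY y = ρY x + 1)
    {a : X} (e : Set.Ici a ≃o Y) (y : Set.Ici a) : ρY (e y) + ρX a = ρX y := by
  have hmono := (strictMono_of_covBy_succ hXcov).monotone
  have hshift : ∀ y z : Set.Ici a, y ⋖ z → ρX z - ρX a = ρX y - ρX a + 1 := fun y z h => by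
    have := hmono y.2
    rw [hXcov _ _ (covBy_coe_Ici h)]
    omega
  rw [rank_orderIso_apply (ρX := fun z : Set.Ici a => ρX z - ρX a) (Nat.sub_self _) hshift
    hYbot hYcov e y]
  have := hmono y.2
  omega

end RankFunction

theorem sum_Icc_sum_filter_rank_eq_sum {X M : Type*} [Fintype X] [AddCommMonoid M]
    (ρ : X → ℕ) {i j : ℕ} (hji : j ≤ i) (hρ : ∀ x, ρ x ≤ i) (f : X → M)
    (hf : ∀ x, i - j < ρ x → f x = 0) :
    ∑ k ∈ Icc j i, ∑ x with ρ x = i - k, f x = ∑ x, f x := by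
  simp only [sum_filter]
  rw [sum_comm]
  refine sum_congr rfl fun x _ => ?_
  have hρx := hρ x
  rw [sum_congr rfl (g := fun k => if i - ρ x = k then f x else 0) fun k hk => by
    rw [mem_Icc] at hk
    exact if_congr (by omega) rfl rfl]
  rw [sum_ite_eq]
  split_ifs with h
  · rfl
  · exact (hf x (by rw [mem_Icc] at h; omega)).symm

section Counting

variable {X Y : Type*} [PartialOrder X] [PartialOrder Y] [Fintype X]

theorem card_filter_le_rank_eq_of_orderIso_Ici [Fintype Y] [OrderBot Y] {ρX : X → ℕ}
    {ρY : Y → ℕ} (hXcov : ∀ x y : X, x ⋖ y → ρX y = ρX x + 1)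
    (hYbot : ρY ⊥ = 0) (hYcov : ∀ x y : Y, x ⋖ y → ρY y = ρY x + 1)
    {a : X} (e : Set.Ici a ≃o Y) (z : Set.Ici a) (r : ℕ) :
    #{y | (z : X) ≤ y ∧ ρX y = ρX z + r} = #{u | e z ≤ u ∧ ρY u = ρY (e z) + r} := by
  have hρ := rank_orderIso_Ici_apply hXcov hYbot hYcov e
  have hz : a ≤ z := z.2
  refine card_bij' (fun y hy => e ⟨y, hz.trans (mem_filter.1 hy).2.1⟩) (fun u _ => e.symm u)
    ?_ ?_ ?_ ?_
  · intro y hy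
    simp only [mem_filter, mem_univ, true_and] at hy ⊢
    refine ⟨e.monotone (Subtype.mk_le_mk.2 hy.1), ?_⟩
    have : ρY (e ⟨y, hz.trans hy.1⟩) + ρX a = ρX y := hρ _
    have := hρ z
    omega
  · intro u hu
    simp only [mem_filter, mem_univ, true_and] at hu ⊢
    have := hρ (e.symm u)
    have := hρ z
    rw [e.apply_symm_apply] at *
    exact ⟨Subtype.coe_le_coe.2 (e.le_symm_apply.2 hu.1), by omega⟩
  · intro y hy
    rw [e.symm_apply_apply]
  · intro u hu
    simp only [e.apply_symm_apply]

theorem card_filter_le_rank_eq_of_orderIso_Ici_bot [Fintype Y] [OrderBot Y] {ρX : X → ℕ}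
    {ρY : Y → ℕ} (hXcov : ∀ x y : X, x ⋖ y → ρX y = ρX x + 1)
    (hYbot : ρY ⊥ = 0) (hYcov : ∀ x y : Y, x ⋖ y → ρY y = ρY x + 1)
    {a : X} (e : Set.Ici a ≃o Y) (r : ℕ) :
    #{y | a ≤ y ∧ ρX y = ρX a + r} = #{u | ρY u = r} := by
  simpa [hYbot] using card_filter_le_rank_eq_of_orderIso_Ici hXcov hYbot hYcov e ⊥ r

variable [OrderBot X] {R : Type*} [Ring R] {μ : X → X → R}

theorem sum_Iic_mobius_bot (hself : μ ⊥ ⊥ = 1)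
    (hrec : ∀ y, ⊥ < y → ∑ z with ⊥ ≤ z ∧ z ≤ y, μ ⊥ z = 0) (y : X) :
    ∑ x with x ≤ y, μ ⊥ x = if y = ⊥ then 1 else 0 := by
  rcases eq_or_ne y ⊥ with rfl | hy
  · simp only [le_bot_iff, if_true]
    rw [sum_filter, sum_ite_eq', if_pos (mem_univ _), hself]
  · simpa [hy] using hrec y (bot_lt_iff_ne_bot.2 hy)

theorem sum_mobius_bot_mul_card_filter_le (hself : μ ⊥ ⊥ = 1)
    (hrec : ∀ y, ⊥ < y → ∑ z with ⊥ ≤ z ∧ z ≤ y, μ ⊥ z = 0) (p : X → Prop) [DecidablePred p] :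
    ∑ x, μ ⊥ x * (#{y | x ≤ y ∧ p y} : R) = if p ⊥ then 1 else 0 := by
  calc ∑ x, μ ⊥ x * (#{y | x ≤ y ∧ p y} : R)
      = ∑ x, ∑ y with x ≤ y ∧ p y, μ ⊥ x := by simp only [sum_const, nsmul_eq_mul']
    _ = ∑ y with p y, ∑ x with x ≤ y, μ ⊥ x :=
        sum_comm' fun x y => by simp only [mem_filter, mem_univ, true_and]
    _ = ∑ y with p y, if y = ⊥ then 1 else 0 :=
        sum_congr rfl fun y _ => sum_Iic_mobius_bot hself hrec y
    _ = if p ⊥ then 1 else 0 := by rw [sum_ite_eq']; simp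

end Counting

theorem Matrix.lowerTriangular_mul_eq_one {R : Type*} [Semiring R] {n : ℕ} (a b : ℕ → ℕ → R)
    (h : ∀ i j, j ≤ i → i ≤ n → ∑ k ∈ Icc j i, a i k * b k j = if i = j then 1 else 0) :
    (Matrix.of fun i j : Fin (n + 1) => if (j : ℕ) ≤ i then a i j else 0) *
      Matrix.of (fun i j : Fin (n + 1) => if (j : ℕ) ≤ i then b i j else 0) = 1 := by
  ext i j
  have hin : (i : ℕ) ≤ n := Nat.lt_succ_iff.1 i.2
  have hsum : ∑ k : Fin (n + 1),
      (if (k : ℕ) ≤ i then a i k else 0) * (if (j : ℕ) ≤ k then b k j else 0) =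
      ∑ k ∈ Icc (j : ℕ) i, a i k * b k j := by
    rw [Fin.sum_univ_eq_sum_range
      (fun k => (if k ≤ i then a i k else 0) * (if (j : ℕ) ≤ k then b k j else 0)),
      ← inter_eq_right.2 (fun k hk => mem_range.2 (by rw [mem_Icc] at hk; omega) :
        Icc (j : ℕ) i ⊆ range (n + 1)), ← sum_ite_mem]
    refine sum_congr rfl fun k _ => ?_
    by_cases hki : k ≤ i <;> by_cases hjk : (j : ℕ) ≤ k <;> simp [hki, hjk]
  rw [Matrix.mul_apply, Matrix.one_apply]
  simp only [Matrix.of_apply]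
  rw [hsum]
  rcases le_or_gt (j : ℕ) i with hji | hij
  · rw [h i j hji hin]
    simp only [Fin.val_eq_val]
  · rw [Icc_eq_empty (by omega), sum_empty, if_neg (by rintro rfl; omega)]

section Whitney

variable {X : Type*} [Fintype X]

def whitneyFirstKind [LE X] [OrderBot X] {R : Type*} [AddCommMonoid R] (ρ : X → ℕ)
    (μ : X → X → R) (k : ℕ) : R :=
  ∑ u with ρ u = k, μ ⊥ u

def whitneySecondKind (ρ : X → ℕ) (k : ℕ) : ℕ :=
  #{u | ρ u = k}

end Whitney

section Uniform

variable {l : ℕ} {Q : Type*} [PartialOrder Q] [Fintype Q] [OrderBot Q] {ρQ : Q → ℕ}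
  {P : ℕ → Type*} [∀ i, PartialOrder (P i)] [∀ i, Fintype (P i)] [∀ i, OrderBot (P i)]
  {ρ : ∀ i, P i → ℕ}

/-- Realise `P i` as the upper set of some `q ∈ Q` of rank `l - i`, and apply uniformity at the
image of `x`. -/
theorem card_filter_le_rank_eq_whitneySecondKind_of_uniform (hρQbot : ρQ ⊥ = 0)
    (hρQcov : ∀ x y : Q, x ⋖ y → ρQ y = ρQ x + 1) (hQpure : ∀ x : Q, IsMax x → ρQ x = l)
    (hρbot : ∀ i ≤ l, ρ i ⊥ = 0) (hρcov : ∀ i ≤ l, ∀ x y : P i, x ⋖ y → ρ i y = ρ i x + 1)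
    (huniform : ∀ x : Q, Nonempty (Set.Ici x ≃o P (l - ρQ x)))
    {i : ℕ} (hi : i ≤ l) (x : P i) (r : ℕ) :
    #{y | x ≤ y ∧ ρ i y = ρ i x + r} = whitneySecondKind (ρ (i - ρ i x)) r := by
  obtain ⟨q, hq⟩ := exists_rank_eq_of_pure hρQbot hρQcov hQpure (Nat.sub_le l i)
  obtain ⟨g⟩ := huniform q
  rw [hq, Nat.sub_sub_self hi] at g
  have hx : ρ i x + ρQ q = ρQ (g.symm x) := by
    simpa using rank_orderIso_Ici_apply hρQcov (hρbot i hi) (hρcov i hi) g (g.symm x)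
  obtain ⟨f⟩ := huniform (g.symm x)
  have hidx : l - ρQ (g.symm x) = i - ρ i x := by omega
  calc #{y | x ≤ y ∧ ρ i y = ρ i x + r}
      = #{y | ((g.symm x : Set.Ici q) : Q) ≤ y ∧ ρQ y = ρQ (g.symm x) + r} := by
        simpa using (card_filter_le_rank_eq_of_orderIso_Ici hρQcov (hρbot i hi) (hρcov i hi) g
          (g.symm x) r).symm
    _ = whitneySecondKind (ρ (l - ρQ (g.symm x))) r :=
        card_filter_le_rank_eq_of_orderIso_Ici_bot hρQcov (hρbot _ (Nat.sub_le _ _))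
          (hρcov _ (Nat.sub_le _ _)) f r
    _ = whitneySecondKind (ρ (i - ρ i x)) r := by rw [hidx]

theorem sum_Icc_whitneyFirstKind_mul_whitneySecondKind_of_uniform (hρQbot : ρQ ⊥ = 0)
    (hρQcov : ∀ x y : Q, x ⋖ y → ρQ y = ρQ x + 1) (hQpure : ∀ x : Q, IsMax x → ρQ x = l)
    (hρbot : ∀ i ≤ l, ρ i ⊥ = 0) (hρcov : ∀ i ≤ l, ∀ x y : P i, x ⋖ y → ρ i y = ρ i x + 1)
    (huniform : ∀ x : Q, Nonempty (Set.Ici x ≃o P (l - ρQ x)))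
    {i j : ℕ} (hji : j ≤ i) (hi : i ≤ l) (hpure : ∀ x : P i, IsMax x → ρ i x = i)
    {μ : P i → P i → ℤ} (hself : μ ⊥ ⊥ = 1)
    (hrec : ∀ y, ⊥ < y → ∑ z with ⊥ ≤ z ∧ z ≤ y, μ ⊥ z = 0) :
    ∑ k ∈ Icc j i, whitneyFirstKind (ρ i) μ (i - k) * whitneySecondKind (ρ k) (k - j) =
      if i = j then 1 else 0 := by
  have hρle := rank_le_of_pure (hρcov i hi) hpure
  have hmono := (strictMono_of_covBy_succ (hρcov i hi)).monotone
  calc ∑ k ∈ Icc j i, whitneyFirstKind (ρ i) μ (i - k) * whitneySecondKind (ρ k) (k - j)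
      = ∑ k ∈ Icc j i, ∑ x with ρ i x = i - k,
          μ ⊥ x * (#{y | x ≤ y ∧ ρ i y = i - j} : ℤ) := by
        refine sum_congr rfl fun k hk => ?_
        rw [whitneyFirstKind, sum_mul]
        refine sum_congr rfl fun x hx => ?_
        rw [mem_Icc] at hk
        rw [mem_filter] at hx
        have hρx := hρle x
        obtain rfl : k = i - ρ i x := by omega
        rw [← card_filter_le_rank_eq_whitneySecondKind_of_uniform hρQbot hρQcov hQpure hρbot
          hρcov huniform hi x]
        congr 3
        ext y
        simp only [mem_filter, mem_univ, true_and]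
        exact and_congr_right fun _ => by omega
    _ = ∑ x, μ ⊥ x * (#{y | x ≤ y ∧ ρ i y = i - j} : ℤ) := by
        refine sum_Icc_sum_filter_rank_eq_sum (ρ i) hji hρle _ fun x hx => ?_
        rw [filter_eq_empty_iff.2 fun y _ hy => by have := hmono hy.1; omega]
        simp
    _ = if ρ i ⊥ = i - j then 1 else 0 :=
        sum_mobius_bot_mul_card_filter_le hself hrec (fun y => ρ i y = i - j)
    _ = if i = j then 1 else 0 := by
        rw [hρbot i hi]
        exact if_congr (by omega) rfl rfl

end Uniform

/-- **Statement 10.** Let `Q` be a finite uniform poset of length `l` with associated uniform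
sequence `(P 0, P 1, ..., P l)`, where each `P i` (for `i ≤ l`) is a finite pure poset of
length `i` with a minimum element.  Purity of a finite poset of length `m` with minimum
element is encoded by a rank function `ρ` with `ρ ⊥ = 0`, increasing by `1` along covering
relations, and taking the value `m` at every maximal element.  Uniformity means that for
every `x ∈ Q` the upper order ideal `{y | y ≥ x}` is isomorphic to `P (l - ρQ x)`.
For `i ≤ l`, the Whitney numbers of `P i` are
`w_k(P i) = Σ_{u : ρ u = k} μ(⊥, u)` (first kind: the coefficient of `x^{i-k}` in the
characteristic polynomial) and `W_k(P i) = #{u : ρ u = k}` (second kind).  Here each `μ i`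
is the Möbius function of `P i`, characterized by `μ(x,x) = 1` and
`Σ_{x ≤ z ≤ y} μ(x,z) = 0` for `x < y`.  Then the `(l+1)×(l+1)` matrices
`[w_{i-j}(P i)]` and `[W_{i-j}(P i)]` (entries `0` when `j > i`) are inverse to each
other. -/
theorem stmt10 (l : ℕ)
    (Q : Type) [PartialOrder Q] [Fintype Q] [OrderBot Q]
    (ρQ : Q → ℕ)
    (hρQbot : ρQ (⊥ : Q) = 0)
    (hρQcov : ∀ x y : Q, x ⋖ y → ρQ y = ρQ x + 1)
    (hQpure : ∀ x : Q, IsMax x → ρQ x = l)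
    (P : ℕ → Type) [∀ i, PartialOrder (P i)] [∀ i, Fintype (P i)] [∀ i, OrderBot (P i)]
    (ρ : ∀ i, P i → ℕ)
    (hρbot : ∀ i ≤ l, ρ i (⊥ : P i) = 0)
    (hρcov : ∀ i ≤ l, ∀ x y : P i, x ⋖ y → ρ i y = ρ i x + 1)
    (hpure : ∀ i ≤ l, ∀ x : P i, IsMax x → ρ i x = i)
    (huniform : ∀ x : Q, Nonempty ((Set.Ici x) ≃o P (l - ρQ x)))
    (μ : ∀ i, P i → P i → ℤ)
    (hμ_self : ∀ i ≤ l, ∀ x : P i, μ i x x = 1)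
    (hμ_rec : ∀ i ≤ l, ∀ x y : P i, x < y →
      ∑ z ∈ Finset.univ.filter (fun z : P i => x ≤ z ∧ z ≤ y), μ i x z = 0) :
    let A : Matrix (Fin (l + 1)) (Fin (l + 1)) ℤ := Matrix.of fun i j =>
      if (j : ℕ) ≤ (i : ℕ) then
        ∑ u ∈ Finset.univ.filter (fun u : P (i : ℕ) => ρ (i : ℕ) u = (i : ℕ) - (j : ℕ)),
          μ (i : ℕ) (⊥ : P (i : ℕ)) u
      else 0
    let B : Matrix (Fin (l + 1)) (Fin (l + 1)) ℤ := Matrix.of fun i j =>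
      if (j : ℕ) ≤ (i : ℕ) then
        ((Finset.univ.filter
            (fun u : P (i : ℕ) => ρ (i : ℕ) u = (i : ℕ) - (j : ℕ))).card : ℤ)
      else 0
    A * B = 1 ∧ B * A = 1 := by
  intro A B
  have hAB : A * B = 1 :=
    Matrix.lowerTriangular_mul_eq_one (fun i j => whitneyFirstKind (ρ i) (μ i) (i - j))
      (fun i j => (whitneySecondKind (ρ i) (i - j) : ℤ)) fun i j hji hil =>
      sum_Icc_whitneyFirstKind_mul_whitneySecondKind_of_uniform hρQbot hρQcov hQpure hρbot hρcov
        huniform hji hil (hpure i hil) (hμ_self i hil ⊥) (hμ_rec i hil ⊥)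
  exact ⟨hAB, mul_eq_one_comm.mp hAB⟩
end

section
/- For every n ≥ 1, the n×n matrices A and B over ℚ, with rows and columns indexed by 1,...,n, defined by A_{ij} = (-1)^{i-j}·C(i-1, j-1)·i^{i-j} and B_{ij} = C(i, j)·j^{i-j} for j ≤ i, and A_{ij} = B_{ij} = 0 for j > i, are inverses of each other: A·B = B·A = I. -/
/-! Entry `(i, k)` of `A * B` is `∑ₘ (-1)^(i-m) C(i,m) (i+1)^(i-m) C(m+1,k+1) (k+1)^(m-k)`
(0-based indices). Pascal's rule `C(m+1,k+1) = C(m,k) + C(m,k+1)` splits it into two sums which,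
by `C(i,m) C(m,k) = C(i,k) C(i-k,m-k)` and the binomial theorem, equal `C(i,k) (k-i)^(i-k)` and
`(k+1) C(i,k+1) (k-i)^(i-k-1)`. Since `(k+1) C(i,k+1) = (i-k) C(i,k)`, they cancel unless
`i = k`. Over a field a one-sided inverse of a square matrix is two-sided. -/
open Finset

section

variable {R : Type*}

theorem sum_range_choose_mul_choose_mul_pow [CommSemiring R] (x y : R) (i k : ℕ) :
    ∑ m ∈ range (i + 1), (i.choose m * m.choose k : R) * x ^ (m - k) * y ^ (i - m) =
      i.choose k * (x + y) ^ (i - k) := by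
  rcases lt_or_ge i k with hik | hki
  · rw [Nat.choose_eq_zero_of_lt hik, Nat.cast_zero, zero_mul]
    refine sum_eq_zero fun m hm => ?_
    rw [Nat.choose_eq_zero_of_lt (by grind : m < k)]
    simp
  obtain ⟨d, rfl⟩ := Nat.exists_eq_add_of_le hki
  have hlow : ∀ m ∈ range k, ((k + d).choose m * m.choose k : R) * x ^ (m - k) *
      y ^ (k + d - m) = 0 := fun m hm => by
    rw [Nat.choose_eq_zero_of_lt (mem_range.mp hm)]
    simp
  rw [add_assoc, sum_range_add, sum_eq_zero hlow, zero_add, Nat.add_sub_cancel_left, add_pow,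
    mul_sum]
  refine sum_congr rfl fun t _ => ?_
  have htrinomial := Nat.choose_mul (n := k + d) (k := k + t) (Nat.le_add_right k t)
  simp only [Nat.add_sub_cancel_left] at htrinomial
  rw [Nat.add_sub_cancel_left, Nat.add_sub_add_left, ← Nat.cast_mul, htrinomial, Nat.cast_mul]
  ring

theorem choose_succ_mul_pow_sub [CommSemiring R] (m k : ℕ) (x : R) :
    (m.choose (k + 1) : R) * x ^ (m - k) = x * ((m.choose (k + 1) : R) * x ^ (m - (k + 1))) := by
  rcases lt_or_ge m (k + 1) with hm | hm
  · simp [Nat.choose_eq_zero_of_lt hm]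
  · rw [show m - k = m - (k + 1) + 1 by omega, pow_succ]
    ring

theorem choose_mul_sub_pow_add_succ_mul_choose_mul_sub_pow [CommRing R] (i k : ℕ) :
    (i.choose k : R) * ((k : R) - i) ^ (i - k) +
        ((k + 1 : ℕ) : R) * ((i.choose (k + 1) : R) * ((k : R) - i) ^ (i - (k + 1))) =
      if i = k then 1 else 0 := by
  rcases lt_trichotomy i k with hik | rfl | hki
  · simp [Nat.choose_eq_zero_of_lt hik, Nat.choose_eq_zero_of_lt (hik.trans k.lt_succ_self),
      hik.ne]
  · simp
  obtain ⟨d, rfl⟩ := Nat.exists_eq_add_of_lt hki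
  have hsucc : ((k + 1 : ℕ) : R) * ((k + d + 1).choose (k + 1) : R) =
      ((k + d + 1).choose k : R) * (d + 1 : ℕ) := by
    rw [← Nat.cast_mul, ← Nat.cast_mul, mul_comm, Nat.choose_succ_right_eq,
      show k + d + 1 - k = d + 1 by omega]
  rw [← mul_assoc, hsucc, if_neg (by omega), show k + d + 1 - k = d + 1 by omega,
    show k + d + 1 - (k + 1) = d by omega, show (k : R) - (k + d + 1 : ℕ) = -(d + 1 : ℕ) by
      push_cast; ring, pow_succ]
  ring

variable (R) in
def signedChoosePow [Ring R] (i j : ℕ) : R :=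
  (-1 : R) ^ (i - j) * (i.choose j : R) * ((i + 1 : ℕ) : R) ^ (i - j)

variable (R) in
def succChoosePow [Semiring R] (i j : ℕ) : R :=
  ((i + 1).choose (j + 1) : R) * ((j + 1 : ℕ) : R) ^ (i - j)

theorem signedChoosePow_of_lt [Ring R] {i j : ℕ} (h : i < j) : signedChoosePow R i j = 0 := by
  simp [signedChoosePow, Nat.choose_eq_zero_of_lt h]

theorem succChoosePow_of_lt [Semiring R] {i j : ℕ} (h : i < j) : succChoosePow R i j = 0 := by
  simp [succChoosePow, Nat.choose_eq_zero_of_lt (Nat.succ_lt_succ h)]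

theorem sum_range_signedChoosePow_mul_succChoosePow [CommRing R] (i k : ℕ) :
    ∑ m ∈ range (i + 1), signedChoosePow R i m * succChoosePow R m k =
      if i = k then 1 else 0 := by
  simp only [signedChoosePow, succChoosePow]
  set x : R := ((k + 1 : ℕ) : R)
  set y : R := -((i + 1 : ℕ) : R)
  have hterm : ∀ m ∈ range (i + 1),
      (-1 : R) ^ (i - m) * (i.choose m : R) * ((i + 1 : ℕ) : R) ^ (i - m) *
        (((m + 1).choose (k + 1) : R) * x ^ (m - k)) =
      (i.choose m * m.choose k : R) * x ^ (m - k) * y ^ (i - m) +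
        x * ((i.choose m * m.choose (k + 1) : R) * x ^ (m - (k + 1)) * y ^ (i - m)) := by
    intro m _
    have hsplit := choose_succ_mul_pow_sub m k x
    rw [Nat.choose_succ_succ', Nat.cast_add (m.choose k), neg_pow]
    linear_combination
      ((-1 : R) ^ (i - m) * (i.choose m : R) * ((i + 1 : ℕ) : R) ^ (i - m)) * hsplit
  have hxy : x + y = (k : R) - i := by push_cast [x, y]; ring
  rw [sum_congr rfl hterm, sum_add_distrib, ← mul_sum, sum_range_choose_mul_choose_mul_pow,
    sum_range_choose_mul_choose_mul_pow, hxy]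
  exact choose_mul_sub_pow_add_succ_mul_choose_mul_sub_pow i k

end

theorem stmt11_general (n : ℕ) :
    let A : Matrix (Fin n) (Fin n) ℚ := Matrix.of fun i j =>
      if (j : ℕ) ≤ (i : ℕ) then
        (-1 : ℚ) ^ ((i : ℕ) - (j : ℕ)) * (Nat.choose (i : ℕ) (j : ℕ) : ℚ) *
          (((i : ℕ) + 1 : ℕ) : ℚ) ^ ((i : ℕ) - (j : ℕ))
      else 0
    let B : Matrix (Fin n) (Fin n) ℚ := Matrix.of fun i j =>
      if (j : ℕ) ≤ (i : ℕ) then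
        (Nat.choose ((i : ℕ) + 1) ((j : ℕ) + 1) : ℚ) *
          (((j : ℕ) + 1 : ℕ) : ℚ) ^ ((i : ℕ) - (j : ℕ))
      else 0
    A * B = 1 ∧ B * A = 1 := by
  intro A B
  have hA : ∀ i j : Fin n, A i j = signedChoosePow ℚ i j := fun i j => by
    simp only [A, Matrix.of_apply]
    split_ifs with h
    · rfl
    · exact (signedChoosePow_of_lt (not_le.mp h)).symm
  have hB : ∀ i j : Fin n, B i j = succChoosePow ℚ i j := fun i j => by
    simp only [B, Matrix.of_apply]
    split_ifs with h
    · rfl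
    · exact (succChoosePow_of_lt (not_le.mp h)).symm
  have hAB : A * B = 1 := by
    ext i k
    have hvanish : ∀ m ∈ range n, m ∉ range (i + 1) →
        signedChoosePow ℚ i m * succChoosePow ℚ m k = 0 := fun m _ hm => by
      rw [signedChoosePow_of_lt (by simpa using hm), zero_mul]
    simp only [Matrix.mul_apply, Matrix.one_apply, hA, hB, Fin.ext_iff]
    rw [Fin.sum_univ_eq_sum_range (fun m => signedChoosePow ℚ i m * succChoosePow ℚ m k),
      ← sum_subset (range_subset_range.mpr i.isLt) hvanish]
    exact sum_range_signedChoosePow_mul_succChoosePow i k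
  exact ⟨hAB, mul_eq_one_comm.mp hAB⟩

/-- **Statement 11.** For every `n ≥ 1`, the `n×n` matrices `A` and `B` over `ℚ` with rows
and columns indexed by `1,...,n` (here index `a : Fin n` represents `a+1`), defined by
`A_{ij} = (-1)^{i-j} C(i-1,j-1) i^{i-j}` and `B_{ij} = C(i,j) j^{i-j}` for `j ≤ i` and
`A_{ij} = B_{ij} = 0` for `j > i` (which is automatic, since the binomial coefficients
vanish there), are inverses of each other. -/
theorem stmt11 (n : ℕ) (hn : 1 ≤ n) :
    let A : Matrix (Fin n) (Fin n) ℚ := Matrix.of fun i j =>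
      if (j : ℕ) ≤ (i : ℕ) then
        (-1 : ℚ) ^ ((i : ℕ) - (j : ℕ)) * (Nat.choose (i : ℕ) (j : ℕ) : ℚ) *
          (((i : ℕ) + 1 : ℕ) : ℚ) ^ ((i : ℕ) - (j : ℕ))
      else 0
    let B : Matrix (Fin n) (Fin n) ℚ := Matrix.of fun i j =>
      if (j : ℕ) ≤ (i : ℕ) then
        (Nat.choose ((i : ℕ) + 1) ((j : ℕ) + 1) : ℚ) *
          (((j : ℕ) + 1 : ℕ) : ℚ) ^ ((i : ℕ) - (j : ℕ))
      else 0
    A * B = 1 ∧ B * A = 1 :=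
  stmt11_general n
end

section
/- For all n ≥ 1, the number of bicolored combs with leaf label set [n] is |Comb²_n| = n^{n-1}. -/
/-!
Cutting a comb on a leaf set `S` at its root leaves a comb on `S \ B` on the left, where `B` is
the leaf set of the right subtree, a nonempty subset of `S` avoiding `min S`. By the coloring
rule the right subtree is either a single leaf (and the root may have either color) or a blue
node whose right child is a leaf `a ≠ min B` (and the root is red), so it can be chosen in
`2` ways if `#B = 1` and in `(k - 1) * (k - 1) ^ (k - 2) = (k - 1) ^ (k - 1)` ways if `#B = k ≥ 2`.
That `n ^ (n - 1)` satisfies the resulting recursion is Abel's identity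
`∑ₖ C(n, k) x (x + k) ^ (k - 1) (y + n - k) ^ (n - k) = (x + y + n) ^ n` at `x = -1`, `y = 1`.
Abel's identity is proved as a polynomial identity in `y`: by induction on `n` both sides have
the same derivative, and both vanish at `y = -(x + n)`, where the left side becomes an `n`-th
finite difference of a polynomial of degree `n - 1`.
-/

/-- A bicolored binary tree with leaf labels from `α`: every internal node has a left and a
right child and carries a color (`true` = red, `false` = blue); leaves carry labels. -/
inductive CTree (α : Type) : Type
  | leaf : α → CTree α
  | node : Bool → CTree α → CTree α → CTree α

namespace CTree

variable {α : Type}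

/-- The list of leaf labels, from left to right. -/
def leaves : CTree α → List α
  | .leaf a => [a]
  | .node _ l r => leaves l ++ leaves r

/-- The label of the leftmost leaf. -/
def firstLeaf : CTree α → α
  | .leaf a => a
  | .node _ l _ => firstLeaf l

/-- The smallest leaf label of a tree (the valency of its root). -/
def minLeaf [LinearOrder α] : CTree α → α
  | .leaf a => a
  | .node _ l r => min (minLeaf l) (minLeaf r)

/-- Normalized: in every subtree, the leftmost leaf carries the smallest leaf label of
that subtree. -/
def Normalized [LinearOrder α] : CTree α → Prop
  | .leaf _ => True
  | .node _ l r => Normalized l ∧ Normalized r ∧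
      ∀ x ∈ leaves l ++ leaves r, firstLeaf l ≤ x

/-- The comb coloring condition: every internal node whose right child is an internal node
is colored red (`true`) and its right child is colored blue (`false`). -/
def CombColor : CTree α → Prop
  | .leaf _ => True
  | .node c l r => CombColor l ∧ CombColor r ∧
      ∀ c' l' r', r = CTree.node c' l' r' → c = true ∧ c' = false

/-- The number of red (`true`) internal nodes. -/
def redCount : CTree α → ℕ
  | .leaf _ => 0
  | .node c l r => redCount l + redCount r + (if c then 1 else 0)

/-- The leaves of `t` are labeled bijectively by the elements of `α`. -/
def IsLabeling [Fintype α] (t : CTree α) : Prop :=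
  (leaves t).Nodup ∧ ∀ x : α, x ∈ leaves t

end CTree

open CTree

open Finset Polynomial

section Abel

variable {R : Type*} [CommRing R]

/-- `x * (x + k) ^ (k - 1)`, with the value `1` at `k = 0`. -/
def abelCoeff (x : R) : ℕ → R
  | 0 => 1
  | k + 1 => x * (x + ↑(k + 1)) ^ k

lemma abelCoeff_mul_pow (x : R) {i j : ℕ} (h : i + j ≠ 0) :
    abelCoeff x i * (x + i) ^ j = x * (x + i) ^ (i + j - 1) := by
  cases i with
  | zero =>
    obtain ⟨j, rfl⟩ := Nat.exists_eq_add_one_of_ne_zero (by simpa using h)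
    simp [abelCoeff, pow_succ']
  | succ k =>
    rw [abelCoeff, mul_assoc, ← pow_add, show k + 1 + j - 1 = k + j by omega]

noncomputable def abelPoly (x b : R) (n : ℕ) : R[X] :=
  ∑ p ∈ antidiagonal n, C (n.choose p.1 * abelCoeff x p.1) * (X + C (b + p.2)) ^ p.2

lemma derivative_abelPoly (x b : R) (n : ℕ) :
    derivative (abelPoly x b (n + 1)) = C ((n : R) + 1) * abelPoly x (b + 1) n := by
  rw [abelPoly, abelPoly, Nat.sum_antidiagonal_succ', mul_sum]
  simp only [pow_zero, mul_one, derivative_add, derivative_C, zero_add, derivative_sum,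
    derivative_C_mul, derivative_X_add_C_pow]
  refine sum_congr rfl fun ⟨i, j⟩ hp => ?_
  obtain rfl : i + j = n := mem_antidiagonal.mp hp
  have hchoose : ((i + j + 1).choose i : R) * ↑(j + 1) = (↑(i + j) + 1) * (i + j).choose i := by
    have := Nat.choose_mul_succ_eq (i + j) i
    rw [show i + j + 1 - i = j + 1 by omega] at this
    simpa [mul_comm] using congrArg (Nat.cast : ℕ → R) this.symm
  have hb : b + ((j + 1 : ℕ) : R) = b + 1 + j := by push_cast; ring
  rw [Nat.add_sub_cancel, hb, ← mul_assoc, ← mul_assoc, ← C_mul, ← C_mul]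
  congr 2
  linear_combination abelCoeff x i * hchoose

lemma eval_abelPoly_neg (x b : R) {n : ℕ} (hn : n ≠ 0) :
    (abelPoly x b n).eval (-(x + b + n)) = 0 := by
  have hterm : ∀ p ∈ antidiagonal n,
      ((n.choose p.1 * abelCoeff x p.1) * (-(x + b + n) + (b + p.2)) ^ p.2 : R) =
        x * (((-1 : ℤ) ^ (n - p.1) * n.choose p.1) • (x + p.1) ^ (n - 1)) := by
    rintro ⟨i, j⟩ hp
    obtain rfl : i + j = n := mem_antidiagonal.mp hp
    have hbase : -(x + b + ↑(i + j)) + (b + j) = -(x + i) := by push_cast; ring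
    rw [hbase, neg_pow, Nat.add_sub_cancel_left, zsmul_eq_mul]
    push_cast
    linear_combination ((i + j).choose i * (-1) ^ j : R) * abelCoeff_mul_pow x hn
  simp only [abelPoly, eval_finsetSum, eval_mul, eval_C, eval_pow, eval_add, eval_X]
  rw [sum_congr rfl hterm, ← mul_sum, Nat.sum_antidiagonal_eq_sum_range_succ_mk]
  have hdiff :=
    congrFun (fwdDiff_iter_pow_eq_zero_of_lt (R := R) (j := n - 1) (n := n) (by omega)) x
  rw [fwdDiff_iter_eq_sum_shift] at hdiff
  simp only [nsmul_eq_mul, mul_one, Pi.zero_apply] at hdiff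
  rw [hdiff, mul_zero]

theorem abelPoly_eq [IsAddTorsionFree R] (x b : R) (n : ℕ) :
    abelPoly x b n = (X + C (x + b + n)) ^ n := by
  induction n generalizing b with
  | zero => simp [abelPoly, abelCoeff]
  | succ n ih =>
    set D := abelPoly x b (n + 1) - (X + C (x + b + ↑(n + 1))) ^ (n + 1)
    have hD : derivative D = 0 := by
      rw [derivative_sub, derivative_abelPoly, ih, derivative_X_add_C_pow]
      push_cast
      ring_nf
    have hroot : D.eval (-(x + b + ↑(n + 1))) = 0 := by
      simp only [D, eval_sub, eval_abelPoly_neg x b n.succ_ne_zero, eval_pow, eval_add, eval_X,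
        eval_C, neg_add_cancel, zero_pow n.succ_ne_zero, sub_zero]
    rw [eq_C_of_derivative_eq_zero hD, eval_C] at hroot
    rw [← sub_eq_zero]
    exact (eq_C_of_derivative_eq_zero hD).trans (by rw [hroot, C_0])

theorem sum_antidiagonal_abelCoeff_mul_pow [IsAddTorsionFree R] (x y : R) (n : ℕ) :
    ∑ p ∈ antidiagonal n, n.choose p.1 * abelCoeff x p.1 * (y + p.2) ^ p.2 =
      (x + y + n) ^ n := by
  simpa [abelPoly, eval_finsetSum] using congrArg (eval 0) (abelPoly_eq x y n)

end Abel

def rightBranchCount : ℕ → ℕ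
  | 0 => 0
  | 1 => 2
  | k + 2 => (k + 1) ^ (k + 1)

lemma rightBranchCount_add_abelCoeff_neg_one (k : ℕ) :
    (rightBranchCount k : ℤ) + abelCoeff (-1) k = if k ≤ 1 then 1 else 0 := by
  match k with
  | 0 => simp [rightBranchCount, abelCoeff]
  | 1 => simp [rightBranchCount, abelCoeff]
  | k + 2 => simp [rightBranchCount, abelCoeff]

theorem sum_choose_mul_rightBranchCount {N : ℕ} (hN : N ≠ 0) :
    ∑ k ∈ range (N + 1), N.choose k * rightBranchCount k * (N + 1 - k) ^ (N - k) =
      (N + 1) ^ N := by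
  have habel := sum_antidiagonal_abelCoeff_mul_pow (-1 : ℤ) 1 N
  rw [Nat.sum_antidiagonal_eq_sum_range_succ_mk, neg_add_cancel, zero_add] at habel
  have hterm : ∀ k ∈ range (N + 1),
      (N.choose k * rightBranchCount k * ↑(N + 1 - k) ^ (N - k) : ℤ) =
      N.choose k * (if k ≤ 1 then 1 else 0) * (1 + ↑(N - k)) ^ (N - k) -
        N.choose k * abelCoeff (-1) k * (1 + ↑(N - k)) ^ (N - k) := by
    intro k hk
    rw [← rightBranchCount_add_abelCoeff_neg_one,
      show (↑(N + 1 - k) : ℤ) = 1 + ↑(N - k) by have := mem_range.mp hk; omega]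
    ring
  have hsmall : ∑ k ∈ range (N + 1),
      (N.choose k * (if k ≤ 1 then 1 else 0) * (1 + ↑(N - k)) ^ (N - k) : ℤ) =
        (N + 1) ^ N + N ^ N := by
    obtain ⟨M, rfl⟩ := Nat.exists_eq_add_one_of_ne_zero hN
    rw [sum_range_succ', sum_range_succ', sum_eq_zero fun k _ => by simp]
    simp only [zero_add, Nat.choose_one_right, Nat.choose_zero_right, le_refl, zero_le, if_true,
      Nat.add_sub_cancel, Nat.sub_zero, Nat.cast_add, Nat.cast_one, mul_one, one_mul]
    ring
  zify
  rw [sum_congr rfl hterm, sum_sub_distrib, habel, hsmall, add_sub_cancel_right]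

namespace CTree

variable {α : Type}

lemma firstLeaf_mem_leaves (t : CTree α) : t.firstLeaf ∈ t.leaves := by
  induction t with
  | leaf a => exact List.mem_singleton_self a
  | node _ l _ ihl _ => exact List.mem_append_left _ ihl

lemma leaves_ne_nil (t : CTree α) : t.leaves ≠ [] :=
  List.ne_nil_of_mem t.firstLeaf_mem_leaves

lemma finite_setOf_leaves_length_le {S : Set α} (hS : S.Finite) (k : ℕ) :
    {t : CTree α | (∀ x ∈ t.leaves, x ∈ S) ∧ t.leaves.length ≤ k}.Finite := by
  induction k with
  | zero =>
    refine Set.finite_empty.subset fun t ht => ?_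
    exact t.leaves_ne_nil (List.eq_nil_of_length_eq_zero (Nat.le_zero.mp ht.2))
  | succ k ih =>
    refine ((hS.image leaf).union
      (Set.finite_iUnion fun c => Set.Finite.image2 (node c) ih ih)).subset ?_
    rintro (a | ⟨c, l, r⟩) ⟨hS', hk⟩
    · exact Or.inl ⟨a, hS' a (List.mem_singleton_self a), rfl⟩
    · simp only [leaves, List.mem_append, List.length_append] at hS' hk
      have hl := List.length_pos_iff.mpr l.leaves_ne_nil
      have hr := List.length_pos_iff.mpr r.leaves_ne_nil
      exact Or.inr (Set.mem_iUnion.mpr ⟨c, l, ⟨fun x hx => hS' x (.inl hx), by omega⟩,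
        r, ⟨fun x hx => hS' x (.inr hx), by omega⟩, rfl⟩)

def RootCompatible (c : Bool) : CTree α → Prop
  | leaf _ => True
  | node c' _ _ => c = true ∧ c' = false

lemma combColor_node_iff {c : Bool} {l r : CTree α} :
    (node c l r).CombColor ↔ l.CombColor ∧ r.CombColor ∧ RootCompatible c r := by
  cases r <;> simp [CombColor, RootCompatible]

lemma two_le_length_leaves_node (c : Bool) (l r : CTree α) :
    2 ≤ (node c l r).leaves.length := by
  have hl := List.length_pos_iff.mpr l.leaves_ne_nil
  have hr := List.length_pos_iff.mpr r.leaves_ne_nil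
  simp only [leaves, List.length_append]
  omega

section LinearOrder

variable [LinearOrder α]

lemma Normalized.firstLeaf_le {t : CTree α} (h : t.Normalized) {x : α} (hx : x ∈ t.leaves) :
    t.firstLeaf ≤ x := by
  cases t with
  | leaf a => exact (List.mem_singleton.mp hx).ge
  | node _ _ _ => exact h.2.2 x hx

def IsComb (S : Finset α) (t : CTree α) : Prop :=
  t.leaves.Nodup ∧ t.leaves.toFinset = S ∧ t.Normalized ∧ t.CombColor

variable {S : Finset α} {t : CTree α}

lemma IsComb.card_eq (h : IsComb S t) : #S = t.leaves.length :=
  h.2.1 ▸ List.toFinset_card_of_nodup h.1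

lemma not_isComb_empty (t : CTree α) : ¬ IsComb ∅ t := fun h =>
  t.leaves_ne_nil (List.eq_nil_of_length_eq_zero (h.card_eq.symm.trans card_empty))

lemma isComb_leaf_iff {a : α} : IsComb S (leaf a) ↔ S = {a} := by
  simp [IsComb, leaves, Normalized, CombColor, eq_comm]

lemma isComb_singleton_iff {a : α} : IsComb {a} t ↔ t = leaf a := by
  constructor
  · rintro h
    cases t with
    | leaf b => simpa [leaves] using h.2.1
    | node c l r =>
      have := two_le_length_leaves_node c l r
      rw [← h.card_eq, card_singleton] at this
      omega
  · rintro rfl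
    simp [IsComb, leaves, Normalized, CombColor]

lemma finite_setOf_isComb (S : Finset α) : {t : CTree α | IsComb S t}.Finite :=
  (finite_setOf_leaves_length_le S.finite_toSet #S).subset fun t ht =>
    ⟨fun x hx => by simpa [← ht.2.1] using hx, ht.card_eq.ge⟩

noncomputable def combs (S : Finset α) : Finset (CTree α) := (finite_setOf_isComb S).toFinset

lemma mem_combs : t ∈ combs S ↔ IsComb S t := Set.Finite.mem_toFinset _

lemma isComb_node_iff (hS : S.Nonempty) {c : Bool} {l r : CTree α} :
    IsComb S (node c l r) ↔
      ∃ B ⊆ S.erase (S.min' hS), IsComb B r ∧ RootCompatible c r ∧ IsComb (S \ B) l := by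
  simp only [IsComb, leaves, Normalized, combColor_node_iff, List.nodup_append',
    List.toFinset_append, ← List.disjoint_toFinset_iff_disjoint]
  constructor
  · rintro ⟨⟨hndl, hndr, hdisj⟩, rfl, ⟨hNl, hNr, hle⟩, hCl, hCr, hc⟩
    have hfirst : l.firstLeaf ∈ l.leaves.toFinset := List.mem_toFinset.2 l.firstLeaf_mem_leaves
    have hmin : (l.leaves.toFinset ∪ r.leaves.toFinset).min' hS = l.firstLeaf :=
      le_antisymm (min'_le _ _ (mem_union_left _ hfirst))
        (le_min' _ _ _ fun x hx => hle x (by simpa using hx))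
    refine ⟨r.leaves.toFinset, fun x hx => ?_, ⟨hndr, rfl, hNr, hCr⟩, hc,
      ⟨hndl, (union_sdiff_cancel_right hdisj).symm, hNl, hCl⟩⟩
    rw [hmin, mem_erase]
    exact ⟨fun h => disjoint_left.1 hdisj (h ▸ hfirst) hx, mem_union_right _ hx⟩
  · rintro ⟨B, hB, ⟨hndr, rfl, hNr, hCr⟩, hc, ⟨hndl, hl, hNl, hCl⟩⟩
    have hBS : r.leaves.toFinset ⊆ S := hB.trans (erase_subset _ _)
    have hleaves : l.leaves.toFinset ∪ r.leaves.toFinset = S := by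
      rw [hl, sdiff_union_of_subset hBS]
    have hm : S.min' hS ∈ l.leaves := by
      rw [← List.mem_toFinset, hl]
      exact mem_sdiff.2 ⟨min'_mem _ _, fun h => (mem_erase.1 (hB h)).1 rfl⟩
    refine ⟨⟨hndl, hndr, by rw [hl]; exact sdiff_disjoint⟩, hleaves, ⟨hNl, hNr, fun x hx => ?_⟩,
      hCl, hCr, hc⟩
    have hxS : x ∈ S := by rw [← hleaves]; simpa using hx
    exact (hNl.firstLeaf_le hm).trans (min'_le _ _ hxS)

/-- The pairs `(c, r)` that can occur as root color and right subtree of a comb whose right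
subtree has leaf set `B`. -/
noncomputable def rightBranches (B : Finset α) : Finset (Bool × CTree α) :=
  open Classical in (univ ×ˢ combs B).filter fun p => RootCompatible p.1 p.2

lemma mem_rightBranches {B : Finset α} {p : Bool × CTree α} :
    p ∈ rightBranches B ↔ IsComb B p.2 ∧ RootCompatible p.1 p.2 := by
  simp [rightBranches, mem_combs]

lemma card_combs_eq_sum (hS : S.Nonempty) (h2 : 2 ≤ #S) :
    #(combs S) =
      ∑ B ∈ (S.erase (S.min' hS)).powerset, #(rightBranches B) * #(combs (S \ B)) := by
  classical
  set P := (S.erase (S.min' hS)).powerset.sigma fun B => rightBranches B ×ˢ combs (S \ B)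
  have himage : combs S = P.image fun q => node q.2.1.1 q.2.2 q.2.1.2 := by
    ext t
    simp only [P, mem_image, mem_sigma, mem_powerset, mem_product, mem_rightBranches, mem_combs]
    constructor
    · intro ht
      cases t with
      | leaf a => simp [ht.card_eq, leaves] at h2
      | node c l r =>
        obtain ⟨B, hB, hr, hc, hl⟩ := (isComb_node_iff hS).1 ht
        exact ⟨⟨B, (c, r), l⟩, ⟨hB, ⟨hr, hc⟩, hl⟩, rfl⟩
    · rintro ⟨⟨B, ⟨c, r⟩, l⟩, ⟨hB, ⟨hr, hc⟩, hl⟩, rfl⟩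
      exact (isComb_node_iff hS).2 ⟨B, hB, hr, hc, hl⟩
  have hinj : Set.InjOn (fun q : (_ : Finset α) × (Bool × CTree α) × CTree α =>
      node q.2.1.1 q.2.2 q.2.1.2) P := by
    rintro ⟨B, ⟨c, r⟩, l⟩ hq ⟨B', ⟨c', r'⟩, l'⟩ hq' h
    simp only [P, coe_sigma, Set.mem_sigma_iff, mem_coe, mem_product, mem_rightBranches] at hq hq'
    obtain ⟨rfl, rfl, rfl⟩ := node.inj h
    obtain rfl : B = B' := hq.2.1.1.2.1.symm.trans hq'.2.1.1.2.1
    rfl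
  rw [himage, card_image_of_injOn hinj, card_sigma]
  simp_rw [card_product]

lemma rightBranches_empty : rightBranches (∅ : Finset α) = ∅ :=
  eq_empty_of_forall_notMem fun p hp => not_isComb_empty p.2 (mem_rightBranches.1 hp).1

lemma rightBranches_singleton (b : α) : rightBranches {b} = univ ×ˢ {leaf b} := by
  ext ⟨c, r⟩
  simp only [mem_rightBranches, isComb_singleton_iff, mem_product, mem_univ, mem_singleton,
    true_and, and_iff_left_iff_imp]
  rintro rfl
  trivial

lemma card_rightBranches_of_two_le {B : Finset α} (hB : B.Nonempty) (h2 : 2 ≤ #B) :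
    #(rightBranches B) = ∑ a ∈ B.erase (B.min' hB), #(combs (B.erase a)) := by
  classical
  have himage : rightBranches B = ((B.erase (B.min' hB)).sigma fun a => combs (B.erase a)).image
      fun q => (true, node false q.2 (leaf q.1)) := by
    ext ⟨c, r⟩
    simp only [mem_rightBranches, mem_image, mem_sigma, mem_combs, Sigma.exists, Prod.mk.injEq]
    constructor
    · rintro ⟨hr, hc⟩
      rcases r with a | ⟨c', l, a | ⟨c'', l', r'⟩⟩
      · simp [hr.card_eq, leaves] at h2
      · obtain ⟨rfl, rfl⟩ := hc
        obtain ⟨B', hB', ha, -, hl⟩ := (isComb_node_iff hB).1 hr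
        obtain rfl := isComb_leaf_iff.1 ha
        rw [sdiff_singleton_eq_erase] at hl
        exact ⟨a, l, ⟨singleton_subset_iff.1 hB', hl⟩, rfl, rfl⟩
      · obtain ⟨rfl, rfl⟩ := hc
        simpa [RootCompatible] using (combColor_node_iff.1 hr.2.2.2).2.2
    · rintro ⟨a, l, ⟨ha, hl⟩, rfl, rfl⟩
      refine ⟨(isComb_node_iff hB).2 ⟨{a}, singleton_subset_iff.2 ha, isComb_singleton_iff.2 rfl,
        trivial, ?_⟩, rfl, rfl⟩
      rwa [sdiff_singleton_eq_erase]
  rw [himage, card_image_of_injective, card_sigma]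
  rintro ⟨a, l⟩ ⟨a', l'⟩ h
  simp only [Prod.mk.injEq, node.injEq, leaf.injEq, true_and] at h
  obtain ⟨rfl, rfl⟩ := h
  rfl


lemma card_rightBranches_eq_rightBranchCount (B : Finset α)
    (ih : ∀ T ⊂ B, T.Nonempty → #(combs T) = #T ^ (#T - 1)) :
    #(rightBranches B) = rightBranchCount #B := by
  rcases B.eq_empty_or_nonempty with rfl | hB
  · simp [rightBranches_empty, rightBranchCount]
  obtain h1 | h2 : #B = 1 ∨ 2 ≤ #B := by have := hB.card_pos; omega
  · obtain ⟨b, rfl⟩ := card_eq_one.1 h1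
    simp [rightBranches_singleton, rightBranchCount]
  obtain ⟨k, hk⟩ := Nat.exists_eq_add_of_le' h2
  have hcombs : ∀ a ∈ B.erase (B.min' hB), #(combs (B.erase a)) = (k + 1) ^ k := by
    intro a ha
    have haB := mem_of_mem_erase ha
    have hcard : #(B.erase a) = k + 1 := by rw [card_erase_of_mem haB, hk]; rfl
    rw [ih _ (erase_ssubset haB) (card_pos.1 (by omega)), hcard, Nat.add_sub_cancel]
  rw [card_rightBranches_of_two_le hB h2, sum_congr rfl hcombs, sum_const,
    card_erase_of_mem (min'_mem _ _), hk, smul_eq_mul, rightBranchCount, pow_succ']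
  rfl

theorem card_combs (S : Finset α) (hS : S.Nonempty) : #(combs S) = #S ^ (#S - 1) := by
  induction S using Finset.strongInduction with
  | H S ih =>
  obtain h1 | h2 : #S = 1 ∨ 2 ≤ #S := by have := hS.card_pos; omega
  · obtain ⟨a, rfl⟩ := card_eq_one.1 h1
    have : combs {a} = {leaf a} := by ext; simp [mem_combs, isComb_singleton_iff]
    simp [this]
  set T := S.erase (S.min' hS)
  have hTS : T ⊂ S := erase_ssubset (min'_mem _ _)
  have hT : #S = #T + 1 := (card_erase_add_one (min'_mem _ _)).symm
  have hterm : ∀ B ∈ T.powerset, #(rightBranches B) * #(combs (S \ B)) =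
      rightBranchCount #B * (#T + 1 - #B) ^ (#T - #B) := by
    intro B hB
    have hBS : B ⊂ S := (mem_powerset.1 hB).trans_ssubset hTS
    rw [card_rightBranches_eq_rightBranchCount B fun U hU => ih U (hU.trans hBS)]
    rcases B.eq_empty_or_nonempty with rfl | hB'
    · simp [rightBranchCount]
    have hm : S.min' hS ∈ S \ B :=
      mem_sdiff.2 ⟨min'_mem _ _, fun h => (mem_erase.1 (mem_powerset.1 hB h)).1 rfl⟩
    rw [ih (S \ B) (sdiff_ssubset hBS.subset hB') ⟨_, hm⟩, card_sdiff_of_subset hBS.subset, hT]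
    congr 2
    omega
  rw [card_combs_eq_sum hS h2, sum_congr rfl hterm,
    sum_powerset_apply_card fun k => rightBranchCount k * (#T + 1 - k) ^ (#T - k)]
  simp_rw [smul_eq_mul, ← mul_assoc]
  rw [sum_choose_mul_rightBranchCount (by omega), hT, Nat.add_sub_cancel]

end LinearOrder

end CTree

/-- **Statement 15.** For all `n ≥ 1`, the number of bicolored combs with leaf label set
`[n]` (normalized labeled bicolored binary trees satisfying the comb coloring condition)
is `n^{n-1}`. -/
theorem stmt15 (n : ℕ) (hn : 1 ≤ n) :
    Nat.card {t : CTree (Fin n) // IsLabeling t ∧ Normalized t ∧ CombColor t}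
      = n ^ (n - 1) := by
  have hiff : ∀ t : CTree (Fin n),
      IsLabeling t ∧ Normalized t ∧ CombColor t ↔ IsComb univ t := by
    intro t
    simp [IsLabeling, IsComb, eq_univ_iff_forall, and_assoc]
  calc Nat.card {t : CTree (Fin n) // IsLabeling t ∧ Normalized t ∧ CombColor t}
      = Nat.card {t : CTree (Fin n) | IsComb univ t} := by simp_rw [hiff]; rfl
    _ = #(combs univ) := Nat.card_eq_card_finite_toFinset _
    _ = n ^ (n - 1) := by
      rw [card_combs _ (univ_nonempty_iff.2 ⟨⟨0, hn⟩⟩), card_univ, Fintype.card_fin]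
end
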